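/- The polynomial (x^3-y^3)(y^3-z^3)(z^3-x^3) vanishes to order exactly 3 at each of the 12 triple points of the dual Hesse arrangement. -/

import Mathlib

open MvPolynomial

noncomputable section

/-- `f` vanishes to order at least `m` at the point `p`, i.e. all partial derivatives
of order `< m` of `f` vanish at `p` (we are in characteristic zero). -/
def VanishToOrder (f : MvPolynomial (Fin 3) ℂ) (p : Fin 3 → ℂ) (m : ℕ) : Prop :=
  ∀ ds : List (Fin 3), ds.length < m →
    eval p (ds.foldr (fun i g => pderiv i g) f) = 0

/-- The 9 linear forms of the dual Hesse arrangement: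
`x - εᵏy`, `y - εᵏz`, `z - εᵏx` for `k = 0,1,2`. -/
def DualHesseForm (ε : ℂ) : Fin 3 × Fin 3 → MvPolynomial (Fin 3) ℂ := fun jk =>
  ![X 0 - C (ε ^ (jk.2 : ℕ)) * X 1,
    X 1 - C (ε ^ (jk.2 : ℕ)) * X 2,
    X 2 - C (ε ^ (jk.2 : ℕ)) * X 0] jk.1

/-!
Since `x³ - y³ = (x - y)(x - εy)(x - ε²y)`, the polynomial `F = (x³-y³)(y³-z³)(z³-x³)` is the
product of the nine linear forms of the arrangement, so by the Leibniz rule it vanishes to order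
at least 3 at any point on three of the lines. A triple point is either a coordinate point, where
`F = (x_l³ - x_{l+1}³) · u` with `u` nonzero at the point, or a point with `x³ = y³ = z³ ≠ 0`, where
`∂³F/∂x²∂y = -54 x⁴y² ≠ 0`; in both cases some third derivative survives.
-/

lemma foldr_pderiv_add {σ R : Type*} [CommSemiring R] (ds : List σ) (f g : MvPolynomial σ R) :
    ds.foldr (fun i g => pderiv i g) (f + g) =
      ds.foldr (fun i g => pderiv i g) f + ds.foldr (fun i g => pderiv i g) g := by
  induction ds with
  | nil => rfl
  | cons i ds ih => simp only [List.foldr_cons, ih, map_add]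

lemma foldr_pderiv_sub {σ R : Type*} [CommRing R] (ds : List σ) (f g : MvPolynomial σ R) :
    ds.foldr (fun i g => pderiv i g) (f - g) =
      ds.foldr (fun i g => pderiv i g) f - ds.foldr (fun i g => pderiv i g) g := by
  induction ds with
  | nil => rfl
  | cons i ds ih => simp only [List.foldr_cons, ih, map_sub]

lemma pderiv_ofNat {σ R : Type*} [CommSemiring R] (i : σ) (n : ℕ) [n.AtLeastTwo] :
    pderiv i (ofNat(n) : MvPolynomial σ R) = 0 :=
  (pderiv i).map_natCast n

section VanishingOrder

variable {f g h : MvPolynomial (Fin 3) ℂ} {p : Fin 3 → ℂ} {m n : ℕ}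

lemma vanishToOrder_succ_iff :
    VanishToOrder f p (m + 1) ↔ eval p f = 0 ∧ ∀ i, VanishToOrder (pderiv i f) p m := by
  refine ⟨fun hf => ⟨hf [] m.succ_pos, fun i ds hds => ?_⟩, fun ⟨h0, hf⟩ ds hds => ?_⟩
  · simpa [List.foldr_append] using hf (ds ++ [i]) (by simpa using hds)
  · obtain rfl | ⟨ds, i, rfl⟩ := ds.eq_nil_or_concat'
    · exact h0
    · simpa [List.foldr_append] using hf i ds (by simpa using hds)

namespace VanishToOrder

lemma zero : VanishToOrder f p 0 := fun _ hds => absurd hds (Nat.not_lt_zero _)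

lemma mono (hf : VanishToOrder f p m) (hnm : n ≤ m) : VanishToOrder f p n :=
  fun ds hds => hf ds (hds.trans_le hnm)

lemma eval_eq_zero (hf : VanishToOrder f p m) (hm : 0 < m) : eval p f = 0 := hf [] hm

lemma add (hf : VanishToOrder f p m) (hg : VanishToOrder g p m) : VanishToOrder (f + g) p m :=
  fun ds hds => by rw [foldr_pderiv_add, map_add, hf ds hds, hg ds hds, add_zero]

lemma sub (hf : VanishToOrder f p m) (hg : VanishToOrder g p m) : VanishToOrder (f - g) p m :=
  fun ds hds => by rw [foldr_pderiv_sub, map_sub, hf ds hds, hg ds hds, sub_zero]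

lemma pderiv (hf : VanishToOrder f p m) (i : Fin 3) : VanishToOrder (pderiv i f) p (m - 1) := by
  cases m with
  | zero => exact zero
  | succ m => exact (vanishToOrder_succ_iff.1 hf).2 i

lemma mul (hf : VanishToOrder f p m) (hg : VanishToOrder g p n) :
    VanishToOrder (f * g) p (m + n) := by
  induction hk : m + n generalizing f g m n with
  | zero => exact zero
  | succ k ih =>
    refine vanishToOrder_succ_iff.2 ⟨?_, fun i => ?_⟩
    · rcases Nat.eq_zero_or_pos m with rfl | hm
      · rw [map_mul, hg.eval_eq_zero (by omega), mul_zero]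
      · rw [map_mul, hf.eval_eq_zero hm, zero_mul]
    · rw [Derivation.leibniz, smul_eq_mul, smul_eq_mul]
      exact ((ih (hf.mono (n := k - (n - 1)) (by omega)) (hg.pderiv i) (by omega)).mono
        (by omega)).add ((ih (hg.mono (n := k - (m - 1)) (by omega)) (hf.pderiv i) (by omega)).mono
        (by omega))

lemma pow (hf : VanishToOrder f p m) (k : ℕ) : VanishToOrder (f ^ k) p (k * m) := by
  induction k with
  | zero => simpa using zero
  | succ k ih => simpa [pow_succ, add_mul] using ih.mul hf

lemma prod {ι : Type*} {s : Finset ι} {f : ι → MvPolynomial (Fin 3) ℂ} {m : ι → ℕ}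
    (hf : ∀ i ∈ s, VanishToOrder (f i) p (m i)) :
    VanishToOrder (∏ i ∈ s, f i) p (∑ i ∈ s, m i) := by
  classical
  induction s using Finset.induction_on with
  | empty => simpa using zero
  | insert i s hi ih =>
    rw [Finset.prod_insert hi, Finset.sum_insert hi]
    exact (hf i (s.mem_insert_self i)).mul (ih fun j hj => hf j (Finset.mem_insert_of_mem hj))

end VanishToOrder

lemma vanishToOrder_one_iff : VanishToOrder f p 1 ↔ eval p f = 0 := by
  simp [vanishToOrder_succ_iff, VanishToOrder.zero]

lemma vanishToOrder_prod_card_filter {ι : Type*} (s : Finset ι) (f : ι → MvPolynomial (Fin 3) ℂ)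
    (p : Fin 3 → ℂ) [DecidablePred fun i => eval p (f i) = 0] :
    VanishToOrder (∏ i ∈ s, f i) p (s.filter fun i => eval p (f i) = 0).card := by
  rw [Finset.card_filter]
  refine VanishToOrder.prod fun i _ => ?_
  split_ifs with hi
  · exact vanishToOrder_one_iff.2 hi
  · exact VanishToOrder.zero

lemma eval_foldr_pderiv_mul_of_vanishToOrder (ds : List (Fin 3))
    (hg : VanishToOrder g p ds.length) :
    eval p (ds.foldr (fun i g => pderiv i g) (g * h)) =
      eval p (ds.foldr (fun i g => pderiv i g) g) * eval p h := by
  induction ds using List.reverseRecOn generalizing g h with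
  | nil => simp
  | append_singleton ds i ih =>
    simp only [List.length_append, List.length_singleton] at hg
    rw [List.foldr_append, List.foldr_append, List.foldr_cons, List.foldr_nil, List.foldr_cons,
      List.foldr_nil, Derivation.leibniz, smul_eq_mul, smul_eq_mul, foldr_pderiv_add, map_add,
      ih (hg.mono ds.length.le_succ), hg ds (by omega), zero_mul, zero_add, mul_comm h,
      ih (by simpa using hg.pderiv i)]

lemma not_vanishToOrder_mul_of_eval_ne_zero (hg : VanishToOrder g p m)
    (hg' : ¬VanishToOrder g p (m + 1)) (hh : eval p h ≠ 0) :
    ¬VanishToOrder (g * h) p (m + 1) := by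
  refine fun hgh => hg' fun ds hds => ?_
  have hD := hgh ds hds
  rw [eval_foldr_pderiv_mul_of_vanishToOrder ds (hg.mono (by omega))] at hD
  exact (mul_eq_zero.1 hD).resolve_right hh

lemma vanishToOrder_X_pow_three_sub {i j : Fin 3} (hi : p i = 0) (hj : p j = 0) :
    VanishToOrder (X i ^ 3 - X j ^ 3) p 3 :=
  ((vanishToOrder_one_iff.2 (by simpa using hi)).pow 3).sub
    ((vanishToOrder_one_iff.2 (by simpa using hj)).pow 3)

lemma not_vanishToOrder_X_pow_three_sub {i j : Fin 3} (hij : i ≠ j) :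
    ¬VanishToOrder (X i ^ 3 - X j ^ 3) p 4 := fun h => by
  simpa [pderiv_X, hij, pderiv_ofNat] using h [i, i, i] (by norm_num)

end VanishingOrder

def dualHessePolynomial : MvPolynomial (Fin 3) ℂ :=
  (X 0 ^ 3 - X 1 ^ 3) * (X 1 ^ 3 - X 2 ^ 3) * (X 2 ^ 3 - X 0 ^ 3)

lemma sub_mul_sub_mul_sub_eq_pow_three_sub_pow_three {A : Type*} [CommRing A] {ε : A}
    (hε : ε ^ 2 + ε + 1 = 0) (x y : A) :
    (x - y) * (x - ε * y) * (x - ε ^ 2 * y) = x ^ 3 - y ^ 3 := by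
  linear_combination (-x ^ 2 * y + ε * x * y ^ 2 - (ε - 1) * y ^ 3) * hε

lemma prod_dualHesseForm {ε : ℂ} (hε : IsPrimitiveRoot ε 3) :
    ∏ jk, DualHesseForm ε jk = dualHessePolynomial := by
  have hε' : C ε ^ 2 + C ε + 1 = (0 : MvPolynomial (Fin 3) ℂ) := by
    rw [← map_pow, ← map_add, ← map_one C, ← map_add, ← map_zero C]
    have h := hε.geom_sum_eq_zero (by norm_num)
    simp only [Finset.sum_range_succ, Finset.sum_range_zero] at h
    exact congrArg C (by linear_combination h)
  simp [Fintype.prod_prod_type, Fin.prod_univ_three, DualHesseForm, dualHessePolynomial,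
    ← sub_mul_sub_mul_sub_eq_pow_three_sub_pow_three hε']

lemma eval_dualHesseForm (ε : ℂ) (v : Fin 3 → ℂ) (j k : Fin 3) :
    eval v (DualHesseForm ε (j, k)) = v j - ε ^ (k : ℕ) * v (j + 1) := by
  fin_cases j <;> simp [DualHesseForm]

lemma vanishToOrder_dualHessePolynomial_of_ncard {ε : ℂ} (hε : IsPrimitiveRoot ε 3)
    {v : Fin 3 → ℂ} {m : ℕ}
    (hm : {jk : Fin 3 × Fin 3 | eval v (DualHesseForm ε jk) = 0}.ncard = m) :
    VanishToOrder dualHessePolynomial v m := by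
  classical
  rw [← prod_dualHesseForm hε, ← hm, Set.ncard_eq_toFinset_card', Set.toFinset_ofPred]
  exact vanishToOrder_prod_card_filter _ _ v

lemma exists_forall_eq_of_eval_dualHesseForm_eq_zero {ε : ℂ} (hε : IsPrimitiveRoot ε 3)
    {v : Fin 3 → ℂ} (j : Fin 3) (hj : v j = 0 → v (j + 1) ≠ 0) :
    ∃ k, ∀ k', eval v (DualHesseForm ε (j, k')) = 0 → k' = k := by
  simp only [eval_dualHesseForm, sub_eq_zero]
  by_cases hk : ∃ k : Fin 3, v j = ε ^ (k : ℕ) * v (j + 1)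
  · obtain ⟨k, hk⟩ := hk
    refine ⟨k, fun k' hk' => ?_⟩
    have hj1 : v (j + 1) ≠ 0 := fun h => hj (by simpa [h] using hk) h
    exact Fin.val_injective <| hε.pow_inj k'.isLt k.isLt <|
      mul_right_cancel₀ hj1 (hk'.symm.trans hk)
  · push Not at hk
    exact ⟨0, fun k' hk' => absurd hk' (hk k')⟩

lemma dualHesse_triple_point_cases {ε : ℂ} (hε : IsPrimitiveRoot ε 3) {v : Fin 3 → ℂ}
    (hv : v ≠ 0) (htriple : {jk : Fin 3 × Fin 3 | eval v (DualHesseForm ε jk) = 0}.ncard = 3) :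
    (∃ l : Fin 3, v l = 0 ∧ v (l + 1) = 0) ∨ (v 0 ≠ 0 ∧ v 1 ≠ 0 ∧ v 0 ^ 3 = v 1 ^ 3) := by
  refine or_iff_not_imp_left.2 fun hcoord => ?_
  push Not at hcoord
  -- Each pencil `x_j = εᵏ x_{j+1}` then meets `v` in at most one line, hence in exactly one.
  choose k hk using fun j => exists_forall_eq_of_eval_dualHesseForm_eq_zero hε j (hcoord j)
  have hS : {jk : Fin 3 × Fin 3 | eval v (DualHesseForm ε jk) = 0} = Set.range fun j => (j, k j) :=
    Set.eq_of_subset_of_ncard_le (fun ⟨j, k'⟩ h => ⟨j, by rw [hk j k' h]⟩)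
      (by rw [htriple, Set.ncard_range_of_injective fun _ _ h => congrArg Prod.fst h]; simp)
  have hrel : ∀ j, v j = ε ^ (k j : ℕ) * v (j + 1) := fun j => by
    have : (j, k j) ∈ {jk : Fin 3 × Fin 3 | eval v (DualHesseForm ε jk) = 0} := hS ▸ ⟨j, rfl⟩
    simpa [eval_dualHesseForm, sub_eq_zero] using this
  have hε0 : ε ≠ 0 := hε.ne_zero (by norm_num)
  have h1 : v 1 ≠ 0 := by
    intro h1
    have h2 : v 2 = 0 := by simpa [h1, hε0] using (hrel 1).symm
    exact hv (funext fun i => by fin_cases i <;> simp [hrel 0, h1, h2])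
  have hcube : v 0 ^ 3 = v 1 ^ 3 := by
    rw [hrel 0, mul_pow, ← pow_mul, pow_mul', hε.pow_eq_one, one_pow, one_mul]; rfl
  exact ⟨by simpa [hrel 0, hε0] using h1, h1, hcube⟩

lemma dualHessePolynomial_eq_rotate (l : Fin 3) :
    dualHessePolynomial = (X l ^ 3 - X (l + 1) ^ 3) *
      ((X (l + 1) ^ 3 - X (l + 2) ^ 3) * (X (l + 2) ^ 3 - X l ^ 3)) := by
  fin_cases l <;> simp [dualHessePolynomial] <;> ring

lemma not_vanishToOrder_four_of_eq_zero_of_eq_zero {v : Fin 3 → ℂ} (hv : v ≠ 0) {l : Fin 3}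
    (h0 : v l = 0) (h1 : v (l + 1) = 0) : ¬VanishToOrder dualHessePolynomial v 4 := by
  have h2 : v (l + 2) ≠ 0 := fun h2 =>
    hv (funext fun i => by fin_cases l <;> fin_cases i <;> simp_all)
  rw [dualHessePolynomial_eq_rotate l]
  exact not_vanishToOrder_mul_of_eval_ne_zero (vanishToOrder_X_pow_three_sub h0 h1)
    (not_vanishToOrder_X_pow_three_sub (by simp)) (by simp [h0, h1, h2])

lemma eval_pderiv_pderiv_pderiv_dualHessePolynomial (v : Fin 3 → ℂ) :
    eval v ([0, 0, 1].foldr (fun i g => pderiv i g) dualHessePolynomial) =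
      -90 * v 0 ^ 4 * v 1 ^ 2 + 36 * v 0 * v 1 ^ 5 := by
  simp [dualHessePolynomial, pderiv_X, pderiv_ofNat]
  ring

lemma not_vanishToOrder_four_of_pow_three_eq {v : Fin 3 → ℂ} (h0 : v 0 ≠ 0) (h1 : v 1 ≠ 0)
    (hcube : v 0 ^ 3 = v 1 ^ 3) : ¬VanishToOrder dualHessePolynomial v 4 := fun h => by
  have hD := h [0, 0, 1] (by norm_num)
  rw [eval_pderiv_pderiv_pderiv_dualHessePolynomial] at hD
  have : v 0 ^ 4 * v 1 ^ 2 = 0 := by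
    linear_combination (-1 / 54 : ℂ) * hD + (-2 / 3 * v 0 * v 1 ^ 2) * hcube
  simp_all

/-- `(x³-y³)(y³-z³)(z³-x³)` vanishes to order exactly 3 at each triple point of the
dual Hesse arrangement (a point lying on exactly 3 of the 9 lines). -/
theorem vanish_order_exactly_three (ε : ℂ) (hε : IsPrimitiveRoot ε 3)
    (v : Fin 3 → ℂ) (hv : v ≠ 0)
    (htriple : {jk : Fin 3 × Fin 3 | eval v (DualHesseForm ε jk) = 0}.ncard = 3) :
    VanishToOrder
      (((X 0) ^ 3 - (X 1) ^ 3) * ((X 1) ^ 3 - (X 2) ^ 3) * ((X 2) ^ 3 - (X 0) ^ 3)) v 3 ∧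
    ¬ VanishToOrder
      (((X 0) ^ 3 - (X 1) ^ 3) * ((X 1) ^ 3 - (X 2) ^ 3) * ((X 2) ^ 3 - (X 0) ^ 3)) v 4 := by
  refine ⟨vanishToOrder_dualHessePolynomial_of_ncard hε htriple, ?_⟩
  rcases dualHesse_triple_point_cases hε hv htriple with ⟨l, h0, h1⟩ | ⟨h0, h1, hcube⟩
  · exact not_vanishToOrder_four_of_eq_zero_of_eq_zero hv h0 h1
  · exact not_vanishToOrder_four_of_pow_three_eq h0 h1 hcube
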